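/- Suppose sqrt(ξ(S)) + sqrt(η(σ)) ≤ 1. Then γ(S,σ) + 2ξ(S)·η(σ) ≤ 1 and ξ(S) − η(σ) ≤ 1. Consequently, the solvability set of incremental loads certified by the condition of Dvijotham et al. is contained in the set of incremental loads satisfying the closed version of the proposed condition. -/

import Mathlib

open Complex

/-- `η_i(σ) := Σ_j Z̃_{ij} · conj(σ_j)` -/
noncomputable def etaI {n : ℕ} (Z : Matrix (Fin n) (Fin n) ℂ) (σ : Fin n → ℂ) (i : Fin n) : ℂ :=
  ∑ j, Z i j * (starRingEnd ℂ) (σ j)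

/-- `ξ_i(S) := Σ_j |Z̃_{ij} · S_j|` -/
noncomputable def xiI {n : ℕ} (Z : Matrix (Fin n) (Fin n) ℂ) (S : Fin n → ℂ) (i : Fin n) : ℝ :=
  ∑ j, ‖Z i j * S j‖

/-- `γ_i(S,σ) := 2(ξ_i(S) + Re η_i(σ)) − ξ_i(S)² − |η_i(σ)|²` -/
noncomputable def gammaI {n : ℕ} (Z : Matrix (Fin n) (Fin n) ℂ) (S σ : Fin n → ℂ)
    (i : Fin n) : ℝ :=
  2 * (xiI Z S i + (etaI Z σ i).re) - (xiI Z S i) ^ 2 - ‖etaI Z σ i‖ ^ 2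

/-- `η(σ) := max_i |η_i(σ)|` -/
noncomputable def etaMax {n : ℕ} (Z : Matrix (Fin n) (Fin n) ℂ) (σ : Fin n → ℂ) : ℝ :=
  ⨆ i, ‖etaI Z σ i‖

/-- `ξ(S) := max_i ξ_i(S)` -/
noncomputable def xiMax {n : ℕ} (Z : Matrix (Fin n) (Fin n) ℂ) (S : Fin n → ℂ) : ℝ :=
  ⨆ i, xiI Z S i

/-- `γ(S,σ) := max_i γ_i(S,σ)` -/
noncomputable def gammaMax {n : ℕ} (Z : Matrix (Fin n) (Fin n) ℂ) (S σ : Fin n → ℂ) : ℝ :=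
  ⨆ i, gammaI Z S σ i

/-- `r̲ := sqrt((1−γ − √Δ)/(2ξ(S)²))` where `Δ = (1−γ)² − 4ξ(S)²η(σ)²` -/
noncomputable def rLow {n : ℕ} (Z : Matrix (Fin n) (Fin n) ℂ) (S σ : Fin n → ℂ) : ℝ :=
  Real.sqrt ((1 - gammaMax Z S σ -
      Real.sqrt ((1 - gammaMax Z S σ) ^ 2 - 4 * (xiMax Z S) ^ 2 * (etaMax Z σ) ^ 2)) /
    (2 * (xiMax Z S) ^ 2))

/-- `r̄ := sqrt((1−γ + √Δ)/(2ξ(S)²))` where `Δ = (1−γ)² − 4ξ(S)²η(σ)²` -/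
noncomputable def rHigh {n : ℕ} (Z : Matrix (Fin n) (Fin n) ℂ) (S σ : Fin n → ℂ) : ℝ :=
  Real.sqrt ((1 - gammaMax Z S σ +
      Real.sqrt ((1 - gammaMax Z S σ) ^ 2 - 4 * (xiMax Z S) ^ 2 * (etaMax Z σ) ^ 2)) /
    (2 * (xiMax Z S) ^ 2))

/-- the fixed point power flow map
`F(u)_i := 1 − Σ_j Z̃_{ij}·conj(σ_j) + Σ_j Z̃_{ij}·(1 − 1/conj(u_j))·conj(S_j)` -/
noncomputable def pfMap {n : ℕ} (Z : Matrix (Fin n) (Fin n) ℂ) (S σ : Fin n → ℂ)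
    (u : Fin n → ℂ) : Fin n → ℂ :=
  fun i => 1 - ∑ j, Z i j * (starRingEnd ℂ) (σ j)
    + ∑ j, Z i j * (1 - 1 / (starRingEnd ℂ) (u j)) * (starRingEnd ℂ) (S j)

/-!
Write `a = √ξ(S)` and `b = √η(σ)`, so that `a + b ≤ 1`. Since `t ↦ 2t - t²` is increasing on
`[0, 1]` and `Re η_i ≤ |η_i|`, every `γ_i` is at most `(2a² - a⁴) + (2b² - b⁴)`, and
`1 - (2a² - a⁴) - (2b² - b⁴) - 2a²b² = (1 - (a + b)²) (1 - (a - b)²) ≥ 0`.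
-/

lemma two_mul_sub_sq_le_two_mul_sub_sq {s t : ℝ} (hst : s ≤ t) (ht : t ≤ 1) :
    2 * s - s ^ 2 ≤ 2 * t - t ^ 2 := by
  nlinarith [mul_nonneg (sub_nonneg.2 hst) (by linarith : (0 : ℝ) ≤ 2 - s - t)]

lemma two_mul_sub_sq_add_le_of_sqrt_add_sqrt_le_one {x y : ℝ} (hx : 0 ≤ x) (hy : 0 ≤ y)
    (hxy : √x + √y ≤ 1) :
    (2 * x - x ^ 2) + (2 * y - y ^ 2) + 2 * x * y ≤ 1 := by
  obtain ⟨a, ha, rfl⟩ : ∃ a, 0 ≤ a ∧ a ^ 2 = x := ⟨√x, Real.sqrt_nonneg x, Real.sq_sqrt hx⟩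
  obtain ⟨b, hb, rfl⟩ : ∃ b, 0 ≤ b ∧ b ^ 2 = y := ⟨√y, Real.sqrt_nonneg y, Real.sq_sqrt hy⟩
  rw [Real.sqrt_sq ha, Real.sqrt_sq hb] at hxy
  have hsum : 0 ≤ 1 - (a + b) ^ 2 := by nlinarith
  have hdiff : 0 ≤ 1 - (a - b) ^ 2 := by nlinarith
  nlinarith [mul_nonneg hsum hdiff]

lemma le_one_of_sqrt_add_sqrt_le_one {x y : ℝ} (hxy : √x + √y ≤ 1) : x ≤ 1 :=
  Real.sqrt_le_one.mp (by linarith [Real.sqrt_nonneg y])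

section Maxima

variable {n : ℕ} (Z : Matrix (Fin n) (Fin n) ℂ)

lemma xiI_nonneg (S : Fin n → ℂ) (i : Fin n) : 0 ≤ xiI Z S i :=
  Finset.sum_nonneg fun _ _ => norm_nonneg _

lemma xiI_le_xiMax (S : Fin n → ℂ) (i : Fin n) : xiI Z S i ≤ xiMax Z S :=
  le_ciSup (Finite.bddAbove_range _) i

lemma norm_etaI_le_etaMax (σ : Fin n → ℂ) (i : Fin n) : ‖etaI Z σ i‖ ≤ etaMax Z σ :=
  le_ciSup (f := fun i => ‖etaI Z σ i‖) (Finite.bddAbove_range _) i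

lemma xiMax_nonneg (S : Fin n → ℂ) : 0 ≤ xiMax Z S :=
  Real.iSup_nonneg (xiI_nonneg Z S)

lemma etaMax_nonneg (σ : Fin n → ℂ) : 0 ≤ etaMax Z σ :=
  Real.iSup_nonneg fun _ => norm_nonneg _

lemma gammaI_le {S σ : Fin n → ℂ} (hxi : xiMax Z S ≤ 1) (heta : etaMax Z σ ≤ 1) (i : Fin n) :
    gammaI Z S σ i ≤
      (2 * xiMax Z S - xiMax Z S ^ 2) + (2 * etaMax Z σ - etaMax Z σ ^ 2) := by
  have hxi_i := two_mul_sub_sq_le_two_mul_sub_sq (xiI_le_xiMax Z S i) hxi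
  have heta_i := two_mul_sub_sq_le_two_mul_sub_sq (norm_etaI_le_etaMax Z σ i) heta
  have hre := Complex.re_le_norm (etaI Z σ i)
  rw [gammaI]
  linarith

theorem gammaMax_add_le_one_of_sqrt_add_sqrt_le_one {S σ : Fin n → ℂ}
    (h : √(xiMax Z S) + √(etaMax Z σ) ≤ 1) :
    gammaMax Z S σ + 2 * xiMax Z S * etaMax Z σ ≤ 1 := by
  have hxi := xiMax_nonneg Z S
  have heta := etaMax_nonneg Z σ
  have hxi1 : xiMax Z S ≤ 1 := le_one_of_sqrt_add_sqrt_le_one h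
  have heta1 : etaMax Z σ ≤ 1 := le_one_of_sqrt_add_sqrt_le_one (by rwa [add_comm])
  have hbound := two_mul_sub_sq_add_le_of_sqrt_add_sqrt_le_one hxi heta h
  have hxi_term := two_mul_sub_sq_le_two_mul_sub_sq hxi hxi1
  have heta_term := two_mul_sub_sq_le_two_mul_sub_sq heta heta1
  have hgamma : gammaMax Z S σ ≤ 1 - 2 * xiMax Z S * etaMax Z σ :=
    Real.iSup_le (fun i => (gammaI_le Z hxi1 heta1 i).trans (by linarith)) (by linarith)
  linarith

theorem xiMax_sub_etaMax_le_one_of_sqrt_add_sqrt_le_one {S σ : Fin n → ℂ}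
    (h : √(xiMax Z S) + √(etaMax Z σ) ≤ 1) : xiMax Z S - etaMax Z σ ≤ 1 := by
  linarith [le_one_of_sqrt_add_sqrt_le_one h, etaMax_nonneg Z σ]

end Maxima

theorem dvijotham_incremental_condition_implies_proposed_general {n : ℕ}
    (Z : Matrix (Fin n) (Fin n) ℂ) (S0 : Fin n → ℂ) :
    (∀ σ S : Fin n → ℂ, S = S0 + σ →
      Real.sqrt (xiMax Z S) + Real.sqrt (etaMax Z σ) ≤ 1 →
      gammaMax Z S σ + 2 * xiMax Z S * etaMax Z σ ≤ 1 ∧ xiMax Z S - etaMax Z σ ≤ 1) ∧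
    {σ : Fin n → ℂ | Real.sqrt (xiMax Z (S0 + σ)) + Real.sqrt (etaMax Z σ) ≤ 1} ⊆
      {σ : Fin n → ℂ |
        gammaMax Z (S0 + σ) σ + 2 * xiMax Z (S0 + σ) * etaMax Z σ ≤ 1 ∧
        xiMax Z (S0 + σ) - etaMax Z σ ≤ 1} := by
  have key : ∀ σ S : Fin n → ℂ, Real.sqrt (xiMax Z S) + Real.sqrt (etaMax Z σ) ≤ 1 →
      gammaMax Z S σ + 2 * xiMax Z S * etaMax Z σ ≤ 1 ∧ xiMax Z S - etaMax Z σ ≤ 1 :=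
    fun _ _ h => ⟨gammaMax_add_le_one_of_sqrt_add_sqrt_le_one Z h,
      xiMax_sub_etaMax_le_one_of_sqrt_add_sqrt_le_one Z h⟩
  exact ⟨fun σ S _ => key σ S, fun σ => key σ (S0 + σ)⟩

/-- if `sqrt(ξ(S)) + sqrt(η(σ)) ≤ 1` (the condition of Dvijotham et
al.), then `γ(S,σ) + 2ξ(S)η(σ) ≤ 1` and `ξ(S) − η(σ) ≤ 1`; consequently the
incremental-load solvability set of Dvijotham et al. is contained in the closed
version of the proposed one. -/
theorem dvijotham_incremental_condition_implies_proposed {n : ℕ} (hn : 1 ≤ n)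
    (Z : Matrix (Fin n) (Fin n) ℂ) (hZ : IsUnit Z.det) (S0 : Fin n → ℂ) :
    (∀ σ S : Fin n → ℂ, S = S0 + σ →
      Real.sqrt (xiMax Z S) + Real.sqrt (etaMax Z σ) ≤ 1 →
      gammaMax Z S σ + 2 * xiMax Z S * etaMax Z σ ≤ 1 ∧ xiMax Z S - etaMax Z σ ≤ 1) ∧
    {σ : Fin n → ℂ | Real.sqrt (xiMax Z (S0 + σ)) + Real.sqrt (etaMax Z σ) ≤ 1} ⊆
      {σ : Fin n → ℂ |
        gammaMax Z (S0 + σ) σ + 2 * xiMax Z (S0 + σ) * etaMax Z σ ≤ 1 ∧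
        xiMax Z (S0 + σ) - etaMax Z σ ≤ 1} :=
  dvijotham_incremental_condition_implies_proposed_general Z S0
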